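/- Let d ≥ 1, let x, β ∈ ℝ^d be fixed, and let δ be a random vector in {0,1}^d with independent coordinates δ_j ~ Bernoulli(p_j), p_j ∈ (0,1]. Set P = diag(p_1,…,p_d) and x̃ = x ⊙ δ. Then E_δ[ (I − P) P⁻² diag(x̃ x̃ᵀ) β βᵀ diag(x̃ x̃ᵀ) P⁻² (I − P) ] = (I − P) P⁻¹ diag(x xᵀ) β βᵀ diag(x xᵀ) P⁻¹ (I − P) + (I − P) P⁻² (P − P²) diag(x xᵀ) diag(β βᵀ) diag(x xᵀ) P⁻² (I − P). -/

import Mathlib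

/-- The probability that an independent Bernoulli mask `δ` (with `δ_j ~ Bernoulli(p_j)`)
equals a given pattern `η ∈ {0,1}^d`. -/
def maskWeight {d : ℕ} (p : Fin d → ℝ) (η : Fin d → Bool) : ℝ :=
  ∏ j, if η j then p j else 1 - p j

/-- The zero-imputed vector `x̃ = x ⊙ δ` for mask pattern `η`. -/
def maskedVec {d : ℕ} (x : Fin d → ℝ) (η : Fin d → Bool) : Fin d → ℝ :=
  fun j => x j * (if η j then 1 else 0)

/-!
Entrywise the claim is a statement about second moments of the mask: the `(i, j)` entry of
the left side is `x_i² x_j² β_i β_j E[δ_i δ_j]` times diagonal factors, and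
`E[δ_i δ_j] = p_i p_j` for `i ≠ j` while `E[δ_i²] = p_i`. The off-diagonal value gives the
rank-one term and the excess `p_i - p_i²` on the diagonal gives the second term. The moments
follow from the product structure of `maskWeight`: the expectation of a product of functions
of distinct coordinates factors into one-coordinate expectations.
-/

open Finset Matrix

theorem sum_maskWeight_mul_prod {d : ℕ} (p : Fin d → ℝ) (f : Fin d → Bool → ℝ) :
    ∑ η, maskWeight p η * ∏ k, f k (η k) = ∏ k, (p k * f k true + (1 - p k) * f k false) :=
  calc ∑ η, maskWeight p η * ∏ k, f k (η k)
      = ∏ k, ∑ b : Bool, (if b then p k else 1 - p k) * f k b := by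
        simp only [Fintype.prod_sum, maskWeight, prod_mul_distrib]
    _ = _ := by simp only [Fintype.sum_bool, if_true, Bool.false_eq_true, if_false]

theorem sum_maskWeight_mul_prod_indicator {d : ℕ} (p : Fin d → ℝ) (S : Finset (Fin d)) :
    ∑ η, maskWeight p η * ∏ k ∈ S, (if η k then 1 else 0) = ∏ k ∈ S, p k := by
  simpa [prod_ite_mem, apply_ite] using
    sum_maskWeight_mul_prod p fun k b => if k ∈ S then (if b then 1 else 0) else 1

theorem maskedVec_sq_mul_sq {d : ℕ} (x : Fin d → ℝ) (η : Fin d → Bool) (i j : Fin d) :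
    maskedVec x η i ^ 2 * maskedVec x η j ^ 2 =
      x i ^ 2 * x j ^ 2 * ∏ k ∈ {i, j}, (if η k then 1 else 0) := by
  rw [prod_boole]
  simp only [maskedVec, mem_insert, mem_singleton, forall_eq_or_imp, forall_eq]
  cases η i <;> cases η j <;> simp

theorem sum_maskWeight_mul_maskedVec_sq_mul_sq {d : ℕ} (p x : Fin d → ℝ) (i j : Fin d) :
    ∑ η, maskWeight p η * (maskedVec x η i ^ 2 * maskedVec x η j ^ 2) =
      x i ^ 2 * x j ^ 2 * if i = j then p i else p i * p j := by
  simp only [maskedVec_sq_mul_sq, mul_left_comm (maskWeight p _), ← mul_sum,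
    sum_maskWeight_mul_prod_indicator]
  split_ifs with hij
  · simp [hij]
  · rw [prod_pair hij]

theorem stmt_18_general (d : ℕ) (x β : Fin d → ℝ) (p : Fin d → ℝ)
    (hp : ∀ j, 0 < p j ∧ p j ≤ 1) :
    (∑ η : Fin d → Bool, maskWeight p η •
        ((1 - Matrix.diagonal p) * (Matrix.diagonal fun j => (p j)⁻¹) *
          (Matrix.diagonal fun j => (p j)⁻¹) *
          (Matrix.diagonal fun j => (maskedVec x η j) ^ 2) *
          (Matrix.of fun i j => β i * β j) *
          (Matrix.diagonal fun j => (maskedVec x η j) ^ 2) *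
          (Matrix.diagonal fun j => (p j)⁻¹) * (Matrix.diagonal fun j => (p j)⁻¹) *
          (1 - Matrix.diagonal p))) =
      (1 - Matrix.diagonal p) * (Matrix.diagonal fun j => (p j)⁻¹) *
          (Matrix.diagonal fun j => (x j) ^ 2) * (Matrix.of fun i j => β i * β j) *
          (Matrix.diagonal fun j => (x j) ^ 2) * (Matrix.diagonal fun j => (p j)⁻¹) *
          (1 - Matrix.diagonal p) +
        (1 - Matrix.diagonal p) * (Matrix.diagonal fun j => (p j)⁻¹) *
          (Matrix.diagonal fun j => (p j)⁻¹) *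
          (Matrix.diagonal p - Matrix.diagonal p * Matrix.diagonal p) *
          (Matrix.diagonal fun j => (x j) ^ 2) * (Matrix.diagonal fun j => (β j) ^ 2) *
          (Matrix.diagonal fun j => (x j) ^ 2) *
          (Matrix.diagonal fun j => (p j)⁻¹) * (Matrix.diagonal fun j => (p j)⁻¹) *
          (1 - Matrix.diagonal p) := by
  have hp0 : ∀ k, p k ≠ 0 := fun k => (hp k).1.ne'
  ext i j
  simp only [← diagonal_one, diagonal_sub, diagonal_mul_diagonal, Matrix.sum_apply,
    Matrix.smul_apply, smul_eq_mul, Matrix.add_apply, mul_diagonal, diagonal_mul, of_apply,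
    diagonal_apply]
  calc _ = (1 - p i) * (p i)⁻¹ ^ 2 * (β i * β j) * (p j)⁻¹ ^ 2 * (1 - p j) *
        ∑ η, maskWeight p η * (maskedVec x η i ^ 2 * maskedVec x η j ^ 2) := by
        rw [mul_sum]
        exact sum_congr rfl fun η _ => by ring
    _ = _ := by
      rw [sum_maskWeight_mul_maskedVec_sq_mul_sq]
      split_ifs with hij
      · subst hij
        field_simp [hp0 i]
        ring
      · field_simp [hp0 i, hp0 j]
        ring

/-- With `x̃ = x ⊙ δ`, `δ_j ~ Bernoulli(p_j)` independent, `p_j ∈ (0,1]`,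
and `P = diag(p)`:
`E_δ[(I − P) P⁻² diag(x̃ x̃ᵀ) β βᵀ diag(x̃ x̃ᵀ) P⁻² (I − P)]
  = (I − P) P⁻¹ diag(x xᵀ) β βᵀ diag(x xᵀ) P⁻¹ (I − P)
    + (I − P) P⁻² (P − P²) diag(x xᵀ) diag(β βᵀ) diag(x xᵀ) P⁻² (I − P)`. -/
theorem stmt_18 (d : ℕ) (hd : 1 ≤ d) (x β : Fin d → ℝ) (p : Fin d → ℝ)
    (hp : ∀ j, 0 < p j ∧ p j ≤ 1) :
    (∑ η : Fin d → Bool, maskWeight p η •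
        ((1 - Matrix.diagonal p) * (Matrix.diagonal fun j => (p j)⁻¹) *
          (Matrix.diagonal fun j => (p j)⁻¹) *
          (Matrix.diagonal fun j => (maskedVec x η j) ^ 2) *
          (Matrix.of fun i j => β i * β j) *
          (Matrix.diagonal fun j => (maskedVec x η j) ^ 2) *
          (Matrix.diagonal fun j => (p j)⁻¹) * (Matrix.diagonal fun j => (p j)⁻¹) *
          (1 - Matrix.diagonal p))) =
      (1 - Matrix.diagonal p) * (Matrix.diagonal fun j => (p j)⁻¹) *
          (Matrix.diagonal fun j => (x j) ^ 2) * (Matrix.of fun i j => β i * β j) *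
          (Matrix.diagonal fun j => (x j) ^ 2) * (Matrix.diagonal fun j => (p j)⁻¹) *
          (1 - Matrix.diagonal p) +
        (1 - Matrix.diagonal p) * (Matrix.diagonal fun j => (p j)⁻¹) *
          (Matrix.diagonal fun j => (p j)⁻¹) *
          (Matrix.diagonal p - Matrix.diagonal p * Matrix.diagonal p) *
          (Matrix.diagonal fun j => (x j) ^ 2) * (Matrix.diagonal fun j => (β j) ^ 2) *
          (Matrix.diagonal fun j => (x j) ^ 2) *
          (Matrix.diagonal fun j => (p j)⁻¹) * (Matrix.diagonal fun j => (p j)⁻¹) *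
          (1 - Matrix.diagonal p) :=
  stmt_18_general d x β p hp
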